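/- Let S be a nonnegative integrable random variable on a probability space with m := 1 − E[S] satisfying 0 < m < 1, and fix T > 0. (a) For 0 ≤ α < α' ≤ 1 and x ∈ ℝ, if σ ∈ [0,∞) satisfies C_BS(x,σ) = E[(S − e^x)₊] + α·m and σ' ∈ [0,∞) satisfies C_BS(x,σ') = E[(S − e^x)₊] + α'·m, then σ < σ'; in particular, whenever the α-collateralised Call implied volatility exists for α ∈ [0,1), it is strictly smaller than the Put-implied volatility I_S^p(x). (b) The threshold x*(β) := inf{x ∈ ℝ : there exists σ ∈ [0,∞) with C_BS(x,σ) = E[(S − e^x)₊] + β·m} is strictly decreasing in β on [0,1): if 0 ≤ α < α' < 1 then x*(α') < x*(α). -/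

import Mathlib

open MeasureTheory Filter

/-- Standard normal cumulative distribution function. -/
noncomputable def stdNormalCDF (y : ℝ) : ℝ :=
  ∫ t in Set.Iic y, Real.exp (-t ^ 2 / 2) / Real.sqrt (2 * Real.pi)

/-- Black-Scholes d₊ (maturity `T`, log-strike `x`, volatility `σ`). -/
noncomputable def dplus (T x σ : ℝ) : ℝ := -x / (σ * Real.sqrt T) + σ * Real.sqrt T / 2

/-- Black-Scholes d₋ (maturity `T`, log-strike `x`, volatility `σ`). -/
noncomputable def dminus (T x σ : ℝ) : ℝ := -x / (σ * Real.sqrt T) - σ * Real.sqrt T / 2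

/-- Black-Scholes Call price (maturity `T`, log-strike `x`, volatility `σ`),
with the convention `CBS T x 0 = max (1 - exp x) 0`. -/
noncomputable def CBS (T x σ : ℝ) : ℝ :=
  if σ = 0 then max (1 - Real.exp x) 0
  else stdNormalCDF (dplus T x σ) - Real.exp x * stdNormalCDF (dminus T x σ)

/-- Black-Scholes Put price (maturity `T`, log-strike `x`, volatility `σ`),
with the convention `PBS T x 0 = max (exp x - 1) 0`. -/
noncomputable def PBS (T x σ : ℝ) : ℝ :=
  if σ = 0 then max (Real.exp x - 1) 0
  else Real.exp x * stdNormalCDF (-dminus T x σ) - stdNormalCDF (-dplus T x σ)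

/-!
For fixed `x`, the Black–Scholes price `σ ↦ CBS T x σ` is continuous and strictly increasing
on `[0, ∞)`: its vega is `φ(d₊) √T > 0`, and the convention at `σ = 0` is its right limit. Its
range is `[(1 - eˣ)⁺, 1)`. Since `m > 0`, raising `α` raises the target price
`E[(S - eˣ)⁺] + α m`, hence strictly raises the implied volatility; the Put-implied volatility is
the case `α = 1` by put–call parity on both sides. By the same parity an `α`-implied volatility
exists at `x` iff the Put price `E[(eˣ - S)⁺]` is at least `(1 - α) m`. The Put price is continuous
in `x`, so the infimum of this superlevel set is attained, and lowering the level strictly lowers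
the infimum.
-/

open Set Topology ProbabilityTheory NNReal

local notation "φ" => gaussianPDFReal 0 1

lemma gaussianPDFReal_zero_one_apply (y : ℝ) :
    φ y = Real.exp (-y ^ 2 / 2) / Real.sqrt (2 * Real.pi) := by
  simp [gaussianPDFReal, div_eq_inv_mul]

lemma continuous_gaussianPDFReal (μ : ℝ) (v : ℝ≥0) : Continuous (gaussianPDFReal μ v) := by
  unfold gaussianPDFReal
  fun_prop

lemma gaussianPDFReal_zero_neg (v : ℝ≥0) (y : ℝ) :
    gaussianPDFReal 0 v (-y) = gaussianPDFReal 0 v y := by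
  simp [gaussianPDFReal]

lemma stdNormalCDF_eq_integral (y : ℝ) : stdNormalCDF y = ∫ t in Iic y, φ t := by
  simp only [stdNormalCDF, gaussianPDFReal_zero_one_apply]

lemma hasDerivAt_stdNormalCDF (y : ℝ) : HasDerivAt stdNormalCDF (φ y) y := by
  have hφ := integrable_gaussianPDFReal 0 1
  have h_eq : (fun z => stdNormalCDF 0 + ∫ t in (0 : ℝ)..z, φ t) = stdNormalCDF := by
    ext z
    rw [stdNormalCDF_eq_integral, stdNormalCDF_eq_integral,
      ← intervalIntegral.integral_Iic_sub_Iic hφ.integrableOn hφ.integrableOn]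
    ring
  rw [← h_eq]
  exact (intervalIntegral.integral_hasDerivAt_right hφ.intervalIntegrable
    hφ.aestronglyMeasurable.stronglyMeasurableAtFilter
    (continuous_gaussianPDFReal 0 1).continuousAt).const_add _

lemma continuous_stdNormalCDF : Continuous stdNormalCDF :=
  continuous_iff_continuousAt.2 fun y => (hasDerivAt_stdNormalCDF y).continuousAt

lemma stdNormalCDF_add_stdNormalCDF_neg (y : ℝ) : stdNormalCDF y + stdNormalCDF (-y) = 1 := by
  have hφ := integrable_gaussianPDFReal 0 1
  have h_neg : stdNormalCDF (-y) = ∫ t in Ioi y, φ t := by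
    rw [stdNormalCDF_eq_integral, ← integral_comp_neg_Ioi]
    simp only [gaussianPDFReal_zero_neg]
  rw [h_neg, stdNormalCDF_eq_integral, intervalIntegral.integral_Iic_add_Ioi hφ.integrableOn
    hφ.integrableOn, integral_gaussianPDFReal_eq_one 0 one_ne_zero]

lemma tendsto_stdNormalCDF_atTop : Tendsto stdNormalCDF atTop (𝓝 1) := by
  rw [funext stdNormalCDF_eq_integral, ← integral_gaussianPDFReal_eq_one 0 one_ne_zero]
  exact (aecover_Iic tendsto_id).integral_tendsto_of_countably_generated
    (integrable_gaussianPDFReal 0 1)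

lemma tendsto_stdNormalCDF_atBot : Tendsto stdNormalCDF atBot (𝓝 0) := by
  have h := (tendsto_stdNormalCDF_atTop.comp tendsto_neg_atBot_atTop).const_sub 1
  rw [sub_self] at h
  exact h.congr fun y => by simp [← stdNormalCDF_add_stdNormalCDF_neg y]

section BlackScholes

variable {T x : ℝ}

lemma dminus_eq_dplus_sub (T x σ : ℝ) : dminus T x σ = dplus T x σ - σ * √T := by
  unfold dminus dplus; ring

lemma gaussianPDFReal_dplus (hT : 0 < T) {σ : ℝ} (hσ : σ ≠ 0) :
    φ (dplus T x σ) = Real.exp x * φ (dminus T x σ) := by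
  have hs : σ * √T ≠ 0 := mul_ne_zero hσ (Real.sqrt_pos.2 hT).ne'
  rw [gaussianPDFReal_zero_one_apply, gaussianPDFReal_zero_one_apply, mul_div_assoc',
    ← Real.exp_add]
  congr 2
  unfold dplus dminus
  field_simp
  ring

lemma CBS_zero (T x : ℝ) : CBS T x 0 = max (1 - Real.exp x) 0 := if_pos rfl

lemma CBS_eventuallyEq_of_ne_zero {l : Filter ℝ} (h : ∀ᶠ σ in l, σ ≠ 0) :
    (fun σ => stdNormalCDF (dplus T x σ) - Real.exp x * stdNormalCDF (dminus T x σ))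
      =ᶠ[l] CBS T x :=
  h.mono fun _ hσ => (if_neg hσ).symm

lemma CBS_sub_PBS (T x σ : ℝ) : CBS T x σ - PBS T x σ = 1 - Real.exp x := by
  by_cases hσ : σ = 0
  · simp only [CBS, PBS, if_pos hσ]
    rw [← neg_sub 1 (Real.exp x), max_zero_sub_max_neg_zero_eq_self]
  · simp only [CBS, PBS, if_neg hσ]
    linear_combination stdNormalCDF_add_stdNormalCDF_neg (dplus T x σ) -
      Real.exp x * stdNormalCDF_add_stdNormalCDF_neg (dminus T x σ)

lemma hasDerivAt_CBS (hT : 0 < T) {σ : ℝ} (hσ : 0 < σ) :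
    HasDerivAt (CBS T x) (φ (dplus T x σ) * √T) σ := by
  have hdp : HasDerivAt (dplus T x) (deriv (dplus T x) σ) σ := by
    refine DifferentiableAt.hasDerivAt ?_
    have : σ * √T ≠ 0 := by positivity
    unfold dplus
    fun_prop (disch := assumption)
  have hdm : HasDerivAt (dminus T x) (deriv (dplus T x) σ - √T) σ := by
    rw [funext (dminus_eq_dplus_sub T x)]
    exact (hdp.sub ((hasDerivAt_id σ).mul_const √T)).congr_deriv (by simp)
  have hC := CBS_eventuallyEq_of_ne_zero (T := T) (x := x) (eventually_ne_nhds hσ.ne')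
  -- the two `deriv (dplus T x) σ` terms cancel because `φ d₊ = eˣ φ d₋`
  refine (((hasDerivAt_stdNormalCDF _).comp σ hdp).sub
    (((hasDerivAt_stdNormalCDF _).comp σ hdm).const_mul _)).congr_of_eventuallyEq hC.symm
    |>.congr_deriv ?_
  rw [gaussianPDFReal_dplus hT hσ.ne']
  ring

lemma neg_div_mul_sqrt_eq (T x σ : ℝ) : -x / (σ * √T) = -x / √T * σ⁻¹ := by ring

lemma tendsto_neg_div_mul_sqrt_nhdsGT_zero_atTop (hT : 0 < T) (hx : x < 0) :
    Tendsto (fun σ => -x / (σ * √T)) (𝓝[>] 0) atTop := by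
  have hc : 0 < -x / √T := div_pos (neg_pos.2 hx) (Real.sqrt_pos.2 hT)
  simpa only [neg_div_mul_sqrt_eq] using tendsto_inv_nhdsGT_zero.const_mul_atTop hc

lemma tendsto_neg_div_mul_sqrt_nhdsGT_zero_atBot (hT : 0 < T) (hx : 0 < x) :
    Tendsto (fun σ => -x / (σ * √T)) (𝓝[>] 0) atBot := by
  have hc : -x / √T < 0 := div_neg_of_neg_of_pos (neg_neg_of_pos hx) (Real.sqrt_pos.2 hT)
  simpa only [neg_div_mul_sqrt_eq] using tendsto_inv_nhdsGT_zero.const_mul_atTop_of_neg hc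

lemma tendsto_mul_sqrt_div_two_nhdsGT_zero (T : ℝ) :
    Tendsto (fun σ => σ * √T / 2) (𝓝[>] 0) (𝓝 0) :=
  tendsto_nhdsWithin_of_tendsto_nhds <|
    (by fun_prop : Continuous fun σ : ℝ => σ * √T / 2).tendsto' 0 0 (by simp)

lemma tendsto_CBS_nhdsGT_zero (hT : 0 < T) :
    Tendsto (CBS T x) (𝓝[>] 0) (𝓝 (CBS T x 0)) := by
  have hε := tendsto_mul_sqrt_div_two_nhdsGT_zero T
  refine Tendsto.congr' (CBS_eventuallyEq_of_ne_zero
    (eventually_mem_nhdsWithin.mono fun _ hσ => ne_of_gt hσ)) ?_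
  rw [CBS_zero]
  rcases lt_trichotomy x 0 with hx | rfl | hx
  · have hu := tendsto_neg_div_mul_sqrt_nhdsGT_zero_atTop hT hx
    have hdp : Tendsto (dplus T x) (𝓝[>] 0) atTop := hu.atTop_add hε
    have hdm : Tendsto (dminus T x) (𝓝[>] 0) atTop :=
      (hu.atTop_add hε.neg).congr fun σ => (sub_eq_add_neg _ _).symm
    rw [max_eq_left (by linarith [Real.exp_lt_one_iff.2 hx])]
    simpa using (tendsto_stdNormalCDF_atTop.comp hdp).sub
      ((tendsto_stdNormalCDF_atTop.comp hdm).const_mul (Real.exp x))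
  · have hdp : Tendsto (dplus T 0) (𝓝[>] 0) (𝓝 0) := by unfold dplus; simpa using hε
    have hdm : Tendsto (dminus T 0) (𝓝[>] 0) (𝓝 0) := by unfold dminus; simpa using hε.neg
    simpa using ((continuous_stdNormalCDF.tendsto 0).comp hdp).sub
      ((continuous_stdNormalCDF.tendsto 0).comp hdm)
  · have hu := tendsto_neg_div_mul_sqrt_nhdsGT_zero_atBot hT hx
    have hdp : Tendsto (dplus T x) (𝓝[>] 0) atBot := hu.atBot_add hε
    have hdm : Tendsto (dminus T x) (𝓝[>] 0) atBot :=
      (hu.atBot_add hε.neg).congr fun σ => (sub_eq_add_neg _ _).symm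
    rw [max_eq_right (by linarith [Real.one_lt_exp_iff.2 hx])]
    simpa using (tendsto_stdNormalCDF_atBot.comp hdp).sub
      ((tendsto_stdNormalCDF_atBot.comp hdm).const_mul (Real.exp x))

lemma tendsto_CBS_atTop (hT : 0 < T) : Tendsto (CBS T x) atTop (𝓝 1) := by
  have hu : Tendsto (fun σ => -x / (σ * √T)) atTop (𝓝 0) := by
    simpa only [neg_div_mul_sqrt_eq, mul_zero] using tendsto_inv_atTop_zero.const_mul (-x / √T)
  have hε : Tendsto (fun σ => σ * √T / 2) atTop atTop :=
    tendsto_id.atTop_mul_const (by positivity) |>.atTop_div_const two_pos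
  have hdp : Tendsto (dplus T x) atTop atTop := hu.add_atTop hε
  have hdm : Tendsto (dminus T x) atTop atBot :=
    (hu.add_atBot (tendsto_neg_atTop_atBot.comp hε)).congr fun σ => (sub_eq_add_neg _ _).symm
  refine Tendsto.congr' (CBS_eventuallyEq_of_ne_zero (eventually_ne_atTop 0)) ?_
  simpa using (tendsto_stdNormalCDF_atTop.comp hdp).sub
    ((tendsto_stdNormalCDF_atBot.comp hdm).const_mul (Real.exp x))

lemma continuousOn_CBS (hT : 0 < T) : ContinuousOn (CBS T x) (Ici 0) := by
  intro σ hσ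
  rcases (mem_Ici.1 hσ).eq_or_lt with rfl | hσ
  · exact continuousWithinAt_Ioi_iff_Ici.1 (tendsto_CBS_nhdsGT_zero hT)
  · exact (hasDerivAt_CBS hT hσ).continuousAt.continuousWithinAt

lemma strictMonoOn_CBS (hT : 0 < T) : StrictMonoOn (CBS T x) (Ici 0) := by
  refine strictMonoOn_of_deriv_pos (convex_Ici 0) (continuousOn_CBS hT) fun σ hσ => ?_
  rw [interior_Ici] at hσ
  rw [(hasDerivAt_CBS hT hσ).deriv]
  exact mul_pos (gaussianPDFReal_pos _ _ _ one_ne_zero) (Real.sqrt_pos.2 hT)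

lemma surjOn_CBS (hT : 0 < T) : SurjOn (CBS T x) (Ici 0) (Ico (CBS T x 0) 1) := by
  rintro t ⟨ht₀, ht₁⟩
  obtain ⟨b, hb, hb₀⟩ :=
    (((tendsto_CBS_atTop hT).eventually_const_lt ht₁).and (eventually_ge_atTop 0)).exists
  obtain ⟨σ, hσ, rfl⟩ := intermediate_value_Icc hb₀
    ((continuousOn_CBS hT).mono Icc_subset_Ici_self) ⟨ht₀, hb.le⟩
  exact ⟨σ, hσ.1, rfl⟩

end BlackScholes

lemma Continuous.csInf_setOf_le_lt_csInf_setOf_le {f : ℝ → ℝ} (hf : Continuous f) {a b : ℝ}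
    (hab : a < b) (hne : {x | b ≤ f x}.Nonempty) (hbdd : BddBelow {x | a ≤ f x}) :
    sInf {x | a ≤ f x} < sInf {x | b ≤ f x} := by
  set x₀ := sInf {x | b ≤ f x}
  have hx₀ : b ≤ f x₀ := (isClosed_le continuous_const hf).csInf_mem hne
    (hbdd.mono fun x hx => hab.le.trans hx)
  have hleft : ∀ᶠ z in 𝓝[<] x₀, a < f z :=
    ((hf.tendsto x₀).mono_left nhdsWithin_le_nhds).eventually_const_lt (hab.trans_le hx₀)
  obtain ⟨z, hz, hzx₀⟩ := (hleft.and self_mem_nhdsWithin).exists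
  exact (csInf_le hbdd hz.le).trans_lt hzx₀

section Payoffs

variable {Ω : Type*} [MeasurableSpace Ω] {μ : Measure Ω} {S : Ω → ℝ}

lemma integral_max_sub_sub_integral_max_sub [IsProbabilityMeasure μ] (hS : Integrable S μ)
    (K : ℝ) :
    (∫ ω, max (S ω - K) 0 ∂μ) - ∫ ω, max (K - S ω) 0 ∂μ = (∫ ω, S ω ∂μ) - K := by
  have hcall : Integrable (fun ω => max (S ω - K) 0) μ := (hS.sub (integrable_const K)).pos_part
  have hput : Integrable (fun ω => max (K - S ω) 0) μ := ((integrable_const K).sub hS).pos_part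
  rw [← integral_sub hcall hput]
  simp_rw [← neg_sub (S _) K, max_zero_sub_max_neg_zero_eq_self]
  rw [integral_sub hS (integrable_const K), integral_const, probReal_univ, one_smul]

lemma integral_max_sub_le [IsProbabilityMeasure μ] (hS₀ : ∀ ω, 0 ≤ S ω) {K : ℝ} (hK : 0 ≤ K) :
    ∫ ω, max (K - S ω) 0 ∂μ ≤ K := by
  simpa using integral_mono_of_nonneg (ae_of_all _ fun ω => le_max_right (K - S ω) 0)
    (integrable_const (μ := μ) K) (ae_of_all _ fun ω => max_le (by linarith [hS₀ ω]) hK)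

lemma sub_integral_le_integral_max_sub [IsProbabilityMeasure μ] (hS : Integrable S μ) (K : ℝ) :
    K - ∫ ω, S ω ∂μ ≤ ∫ ω, max (K - S ω) 0 ∂μ := by
  have hKS := (integrable_const K).sub hS
  simpa [integral_sub (integrable_const K) hS] using
    integral_mono hKS hKS.pos_part fun ω => le_max_left (K - S ω) 0

lemma continuous_integral_max_sub [IsFiniteMeasure μ] (hS : Integrable S μ) :
    Continuous fun K => ∫ ω, max (K - S ω) 0 ∂μ := by
  refine continuous_iff_continuousAt.2 fun K₀ => continuousAt_of_dominated
    (bound := fun ω => |K₀| + 1 + |S ω|)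
    (Eventually.of_forall fun K => ((integrable_const K).sub hS).pos_part.aestronglyMeasurable)
    ?_ ((integrable_const _).add hS.abs) (ae_of_all _ fun ω => by fun_prop)
  filter_upwards [Metric.ball_mem_nhds K₀ one_pos] with K hK
  refine ae_of_all _ fun ω => ?_
  rw [Metric.mem_ball, Real.dist_eq, abs_lt] at hK
  rw [Real.norm_eq_abs, abs_of_nonneg (le_max_right _ _)]
  exact max_le (by linarith [le_abs_self K₀, neg_abs_le (S ω)]) (by positivity)

lemma exists_le_integral_max_exp_sub [IsProbabilityMeasure μ] (hS : Integrable S μ) (L : ℝ) :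
    ∃ x, L ≤ ∫ ω, max (Real.exp x - S ω) 0 ∂μ := by
  obtain ⟨x, hx⟩ := (Real.tendsto_exp_atTop.atTop_add (tendsto_const_nhds (x := -∫ ω, S ω ∂μ))
    |>.eventually_ge_atTop L).exists
  exact ⟨x, hx.trans (sub_integral_le_integral_max_sub hS _)⟩

lemma bddBelow_setOf_le_integral_max_exp_sub [IsProbabilityMeasure μ] (hS₀ : ∀ ω, 0 ≤ S ω)
    {L : ℝ} (hL : 0 < L) :
    BddBelow {x | L ≤ ∫ ω, max (Real.exp x - S ω) 0 ∂μ} :=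
  ⟨Real.log L, fun x hx => (Real.log_le_iff_le_exp hL).2
    (hx.trans (integral_max_sub_le hS₀ (Real.exp_pos x).le))⟩

/-- By put–call parity, the collateralised Call price lies in the range `[CBS T x 0, 1)` of
`CBS T x` exactly when the Put price is at least `(1 - β) * m`. -/
lemma setOf_exists_CBS_eq_collateralised_call [IsProbabilityMeasure μ] (hS₀ : ∀ ω, 0 ≤ S ω)
    (hS : Integrable S μ) {m : ℝ} (hm : m = 1 - ∫ ω, S ω ∂μ) (hm₀ : 0 < m) {T β : ℝ}
    (hT : 0 < T) (hβ₀ : 0 ≤ β) (hβ₁ : β < 1) :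
    {x | ∃ σ, 0 ≤ σ ∧ CBS T x σ = (∫ ω, max (S ω - Real.exp x) 0 ∂μ) + β * m} =
      {x | (1 - β) * m ≤ ∫ ω, max (Real.exp x - S ω) 0 ∂μ} := by
  ext x
  simp only [mem_ofPred_eq]
  have hparity := integral_max_sub_sub_integral_max_sub hS (Real.exp x)
  have hcall₀ : 0 ≤ ∫ ω, max (S ω - Real.exp x) 0 ∂μ :=
    integral_nonneg fun ω => le_max_right _ _
  have hput := integral_max_sub_le (μ := μ) hS₀ (Real.exp_pos x).le
  have hβm := mul_lt_mul_of_pos_right hβ₁ hm₀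
  constructor
  · rintro ⟨σ, hσ, hσx⟩
    have hCBS := (strictMonoOn_CBS (x := x) hT).monotoneOn self_mem_Ici hσ hσ
    rw [CBS_zero, hσx] at hCBS
    linarith [le_max_left (1 - Real.exp x) 0]
  · intro hx
    refine surjOn_CBS hT ⟨?_, by linarith⟩
    rw [CBS_zero]
    exact max_le (by linarith) (by nlinarith)

end Payoffs

theorem alpha_collateralised_call_iv_monotonicity_general
    {Ω : Type*} [MeasurableSpace Ω] (μ : Measure Ω) [IsProbabilityMeasure μ]
    (S : Ω → ℝ) (hS : ∀ ω, 0 ≤ S ω) (hSint : Integrable S μ)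
    (m : ℝ) (hm : m = 1 - ∫ ω, S ω ∂μ) (hm0 : 0 < m)
    (T : ℝ) (hT : 0 < T) :
    (∀ α α' : ℝ, 0 ≤ α → α < α' → α' ≤ 1 → ∀ x σ σ' : ℝ, 0 ≤ σ → 0 ≤ σ' →
      CBS T x σ = (∫ ω, max (S ω - Real.exp x) 0 ∂μ) + α * m →
      CBS T x σ' = (∫ ω, max (S ω - Real.exp x) 0 ∂μ) + α' * m → σ < σ') ∧
    (∀ α : ℝ, 0 ≤ α → α < 1 → ∀ x σ σp : ℝ, 0 ≤ σ → 0 ≤ σp →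
      CBS T x σ = (∫ ω, max (S ω - Real.exp x) 0 ∂μ) + α * m →
      PBS T x σp = (∫ ω, max (Real.exp x - S ω) 0 ∂μ) → σ < σp) ∧
    (∀ α α' : ℝ, 0 ≤ α → α < α' → α' < 1 →
      sInf {x : ℝ | ∃ σ : ℝ, 0 ≤ σ ∧
          CBS T x σ = (∫ ω, max (S ω - Real.exp x) 0 ∂μ) + α' * m}
        < sInf {x : ℝ | ∃ σ : ℝ, 0 ≤ σ ∧
            CBS T x σ = (∫ ω, max (S ω - Real.exp x) 0 ∂μ) + α * m}) := by
  refine ⟨fun α α' _ hαα' _ x σ σ' hσ hσ' hσx hσ'x => ?_,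
    fun α _ hα₁ x σ σp hσ hσp hσx hσpx => ?_, fun α α' hα₀ hαα' hα'₁ => ?_⟩
  · refine ((strictMonoOn_CBS (x := x) hT).lt_iff_lt hσ hσ').1 ?_
    linarith [mul_lt_mul_of_pos_right hαα' hm0]
  · refine ((strictMonoOn_CBS (x := x) hT).lt_iff_lt hσ hσp).1 ?_
    linarith [mul_lt_mul_of_pos_right hα₁ hm0, CBS_sub_PBS T x σp,
      integral_max_sub_sub_integral_max_sub hSint (Real.exp x)]
  · have hput := (continuous_integral_max_sub hSint).comp Real.continuous_exp
    rw [setOf_exists_CBS_eq_collateralised_call hS hSint hm hm0 hT (hα₀.trans hαα'.le) hα'₁,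
      setOf_exists_CBS_eq_collateralised_call hS hSint hm hm0 hT hα₀ (hαα'.trans hα'₁)]
    exact hput.csInf_setOf_le_lt_csInf_setOf_le (by nlinarith)
      (exists_le_integral_max_exp_sub hSint _)
      (bddBelow_setOf_le_integral_max_exp_sub hS (by nlinarith))

/-- (a) strict monotonicity in `α` of the `α`-collateralised Call implied
volatility (in particular it is strictly smaller than the Put-implied volatility for
`α < 1`), and (b) strict monotonicity of the existence threshold `x*(α)`. -/
theorem alpha_collateralised_call_iv_monotonicity
    {Ω : Type*} [MeasurableSpace Ω] (μ : Measure Ω) [IsProbabilityMeasure μ]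
    (S : Ω → ℝ) (hS : ∀ ω, 0 ≤ S ω) (hSint : Integrable S μ)
    (m : ℝ) (hm : m = 1 - ∫ ω, S ω ∂μ) (hm0 : 0 < m) (hm1 : m < 1)
    (T : ℝ) (hT : 0 < T) :
    (∀ α α' : ℝ, 0 ≤ α → α < α' → α' ≤ 1 → ∀ x σ σ' : ℝ, 0 ≤ σ → 0 ≤ σ' →
      CBS T x σ = (∫ ω, max (S ω - Real.exp x) 0 ∂μ) + α * m →
      CBS T x σ' = (∫ ω, max (S ω - Real.exp x) 0 ∂μ) + α' * m → σ < σ') ∧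
    (∀ α : ℝ, 0 ≤ α → α < 1 → ∀ x σ σp : ℝ, 0 ≤ σ → 0 ≤ σp →
      CBS T x σ = (∫ ω, max (S ω - Real.exp x) 0 ∂μ) + α * m →
      PBS T x σp = (∫ ω, max (Real.exp x - S ω) 0 ∂μ) → σ < σp) ∧
    (∀ α α' : ℝ, 0 ≤ α → α < α' → α' < 1 →
      sInf {x : ℝ | ∃ σ : ℝ, 0 ≤ σ ∧
          CBS T x σ = (∫ ω, max (S ω - Real.exp x) 0 ∂μ) + α' * m}
        < sInf {x : ℝ | ∃ σ : ℝ, 0 ≤ σ ∧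
            CBS T x σ = (∫ ω, max (S ω - Real.exp x) 0 ∂μ) + α * m}) :=
  alpha_collateralised_call_iv_monotonicity_general μ S hS hSint m hm hm0 T hT
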